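/- arXiv:2004.01460 — 6 statements merged into one kernel-verified Lean document; each statement's English description precedes it below -/
import Mathlib

section
/- Let $a>0$ and let $x:(-\infty,0]\to\mathbb{R}$ be a bounded continuous function. If there exists a bounded continuous function $h:(-\infty,0]\to\mathbb{R}$ such that both $t\mapsto e^{at}h(t)$ and $t\mapsto e^{at}(h(t)-x(t))$ are nonnegative and nondecreasing on $(-\infty,0]$, then $\sup_{k\geq 1} V_{[-k,-k+1]}(x) < \infty$; in fact $V_{[-k,-k+1]}(x) \leq e^{a}(2\|h\|_\infty + \|x\|_\infty) + e^{a}\|x\|_\infty$ for every $k\geq 1$. -/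
/-!
On `[α, β] ⊆ (-∞, 0]` write `x = φ (u - v)` with `φ t = e^{-at}` antitone and `u = e^{a·} h`,
`v = e^{a·} (h - x)` monotone. Splitting `x s - x t = φ s ((u s - u t) - (v s - v t)) +
(φ s - φ t) (u t - v t)` shows that the increments of `x` are dominated by those of the monotone
function `φ α (u + v) - B φ`, where `B` bounds `|u - v| = e^{a·} |x|` on `[α, β]`. So the variation
of `x` is at most `φ α (u β + v β) + B φ α`, and `u α, v α ≥ 0` make this a bound in terms of
`‖h‖_∞`, `‖x‖_∞` and `e^{a (β - α)}` alone.
-/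

open Set

lemma eVariationOn_le_of_edist_le {ι E F : Type*} [LinearOrder ι] [PseudoEMetricSpace E]
    [PseudoEMetricSpace F] {f : ι → E} {g : ι → F} {s : Set ι}
    (h : ∀ t ∈ s, ∀ r ∈ s, t ≤ r → edist (f r) (f t) ≤ edist (g r) (g t)) :
    eVariationOn f s ≤ eVariationOn g s :=
  iSup_le fun ⟨_, _, hu, us⟩ =>
    (Finset.sum_le_sum fun i _ => h _ (us i) _ (us (i + 1)) (hu i.le_succ)).trans
      (eVariationOn.sum_le hu us)

lemma eVariationOn_Icc_le_of_dist_le_sub {ι E : Type*} [LinearOrder ι] [PseudoMetricSpace E]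
    {f : ι → E} {F : ι → ℝ} {α β : ι} (hαβ : α ≤ β)
    (hfF : ∀ t ∈ Icc α β, ∀ r ∈ Icc α β, t ≤ r → dist (f r) (f t) ≤ F r - F t) :
    eVariationOn f (Icc α β) ≤ ENNReal.ofReal (F β - F α) := by
  have hF : MonotoneOn F (Icc α β) := fun t ht r hr htr =>
    sub_nonneg.1 (dist_nonneg.trans (hfF t ht r hr htr))
  calc eVariationOn f (Icc α β) ≤ eVariationOn F (Icc α β) := by
        refine eVariationOn_le_of_edist_le fun t ht r hr htr => ?_
        rw [edist_dist, edist_dist, Real.dist_eq, abs_of_nonneg (sub_nonneg.2 (hF ht hr htr))]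
        exact ENNReal.ofReal_le_ofReal (hfF t ht r hr htr)
    _ = ENNReal.ofReal (F β - F α) := by
        simpa using hF.eVariationOn_eq (left_mem_Icc.2 hαβ) (right_mem_Icc.2 hαβ)

lemma abs_mul_sub_sub_mul_sub_le {φs φt φα us ut vs vt B : ℝ} (hφs : 0 ≤ φs) (hφst : φs ≤ φt)
    (hφtα : φt ≤ φα) (hu : ut ≤ us) (hv : vt ≤ vs) (hB : |ut - vt| ≤ B) :
    |φs * (us - vs) - φt * (ut - vt)| ≤ φα * ((us - ut) + (vs - vt)) + B * (φt - φs) := by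
  calc |φs * (us - vs) - φt * (ut - vt)|
      = |φs * ((us - ut) - (vs - vt)) + (φs - φt) * (ut - vt)| := by ring_nf
    _ ≤ |φs * ((us - ut) - (vs - vt))| + |(φs - φt) * (ut - vt)| := abs_add_le _ _
    _ ≤ φα * ((us - ut) + (vs - vt)) + B * (φt - φs) := by
        gcongr
        · rw [abs_mul, abs_of_nonneg hφs]
          exact mul_le_mul (hφst.trans hφtα) (abs_le.2 ⟨by linarith, by linarith⟩)
            (abs_nonneg _) (hφs.trans (hφst.trans hφtα))
        · rw [abs_mul, abs_of_nonpos (sub_nonpos.2 hφst), neg_sub, mul_comm]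
          exact mul_le_mul_of_nonneg_right hB (sub_nonneg.2 hφst)

lemma eVariationOn_mul_sub_le {ι : Type*} [LinearOrder ι] {φ u v : ι → ℝ} {α β : ι} {B : ℝ}
    (hαβ : α ≤ β) (hφ : AntitoneOn φ (Icc α β)) (hφ0 : ∀ t ∈ Icc α β, 0 ≤ φ t)
    (hu : MonotoneOn u (Icc α β)) (hv : MonotoneOn v (Icc α β))
    (hB : ∀ t ∈ Icc α β, |u t - v t| ≤ B) :
    eVariationOn (fun t => φ t * (u t - v t)) (Icc α β) ≤
      ENNReal.ofReal (φ α * ((u β - u α) + (v β - v α)) + B * (φ α - φ β)) := by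
  have hα : α ∈ Icc α β := left_mem_Icc.2 hαβ
  have key := eVariationOn_Icc_le_of_dist_le_sub (f := fun t => φ t * (u t - v t))
    (F := fun t => φ α * (u t + v t) - B * φ t) hαβ fun t ht r hr htr => by
      rw [Real.dist_eq]
      convert abs_mul_sub_sub_mul_sub_le (hφ0 r hr) (hφ ht hr htr) (hφ hα ht ht.1)
        (hu ht hr htr) (hv ht hr htr) (hB t ht) using 1
      ring
  convert key using 2
  ring

open Real in
lemma eVariationOn_Icc_le_of_monotoneOn_exp_mul {a : ℝ} (ha : 0 ≤ a) {x h : ℝ → ℝ} {α β Mx Mh : ℝ}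
    (hαβ : α ≤ β) (hMx : ∀ t ∈ Icc α β, |x t| ≤ Mx) (hMh : ∀ t ∈ Icc α β, |h t| ≤ Mh)
    (hpos : ∀ t ∈ Icc α β, 0 ≤ exp (a * t) * h t)
    (hmono : MonotoneOn (fun t => exp (a * t) * h t) (Icc α β))
    (hpos' : ∀ t ∈ Icc α β, 0 ≤ exp (a * t) * (h t - x t))
    (hmono' : MonotoneOn (fun t => exp (a * t) * (h t - x t)) (Icc α β)) :
    eVariationOn x (Icc α β) ≤
      ENNReal.ofReal (exp (a * (β - α)) * (2 * Mh + Mx) + exp (a * (β - α)) * Mx) := by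
  set u := fun t => exp (a * t) * h t
  set v := fun t => exp (a * t) * (h t - x t)
  have hα : α ∈ Icc α β := left_mem_Icc.2 hαβ
  have hβ : β ∈ Icc α β := right_mem_Icc.2 hαβ
  have hx : x = fun t => exp (-(a * t)) * (u t - v t) := by
    funext t
    rw [exp_neg]
    field_simp
    ring
  have hB : ∀ t ∈ Icc α β, |u t - v t| ≤ exp (a * β) * Mx := fun t ht => by
    rw [show u t - v t = exp (a * t) * x t by ring, abs_mul, abs_exp]
    exact mul_le_mul (exp_le_exp.2 (mul_le_mul_of_nonneg_left ht.2 ha)) (hMx t ht)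
      (abs_nonneg _) (exp_pos _).le
  have hφ : AntitoneOn (fun t => exp (-(a * t))) (Icc α β) := fun t _ r _ htr =>
    exp_le_exp.2 (neg_le_neg (mul_le_mul_of_nonneg_left htr ha))
  have huβ : u β ≤ exp (a * β) * Mh :=
    mul_le_mul_of_nonneg_left ((le_abs_self _).trans (hMh β hβ)) (exp_pos _).le
  have hvβ : v β ≤ exp (a * β) * (Mh + Mx) := by
    have := abs_le.1 (hMh β hβ)
    have := abs_le.1 (hMx β hβ)
    exact mul_le_mul_of_nonneg_left (by linarith) (exp_pos _).le
  have hBnonneg : 0 ≤ exp (a * β) * Mx :=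
    mul_nonneg (exp_pos _).le ((abs_nonneg _).trans (hMx α hα))
  rw [hx]
  refine (eVariationOn_mul_sub_le hαβ hφ (fun t _ => (exp_pos _).le) hmono hmono' hB).trans
    (ENNReal.ofReal_le_ofReal ?_)
  calc exp (-(a * α)) * ((u β - u α) + (v β - v α))
        + exp (a * β) * Mx * (exp (-(a * α)) - exp (-(a * β)))
      ≤ exp (-(a * α)) * (u β + v β) + exp (a * β) * Mx * exp (-(a * α)) := by
        have := hpos α hα
        have := hpos' α hα
        refine add_le_add (mul_le_mul_of_nonneg_left (by linarith) (exp_pos _).le) ?_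
        exact mul_le_mul_of_nonneg_left (sub_le_self _ (exp_pos _).le) hBnonneg
    _ ≤ exp (-(a * α)) * (exp (a * β) * Mh + exp (a * β) * (Mh + Mx))
        + exp (a * β) * Mx * exp (-(a * α)) := by gcongr
    _ = exp (a * (β - α)) * (2 * Mh + Mx) + exp (a * (β - α)) * Mx := by
        rw [show a * (β - α) = a * β + -(a * α) by ring, exp_add]
        ring

theorem stmt1_general (a : ℝ) (ha : 0 < a) (x h : ℝ → ℝ)
    (Mx : ℝ) (hMx : ∀ t ≤ (0:ℝ), |x t| ≤ Mx)
    (Mh : ℝ) (hMh : ∀ t ≤ (0:ℝ), |h t| ≤ Mh)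
    (hpos : ∀ t ≤ (0:ℝ), 0 ≤ Real.exp (a * t) * h t)
    (hmono : MonotoneOn (fun t => Real.exp (a * t) * h t) (Iic 0))
    (hpos' : ∀ t ≤ (0:ℝ), 0 ≤ Real.exp (a * t) * (h t - x t))
    (hmono' : MonotoneOn (fun t => Real.exp (a * t) * (h t - x t)) (Iic 0)) :
    (∃ C : ℝ, ∀ k : ℕ, 1 ≤ k →
      eVariationOn x (Icc (-(k:ℝ)) (-(k:ℝ) + 1)) ≤ ENNReal.ofReal C) ∧
    ∀ k : ℕ, 1 ≤ k →
      eVariationOn x (Icc (-(k:ℝ)) (-(k:ℝ) + 1)) ≤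
        ENNReal.ofReal (Real.exp a * (2 * Mh + Mx) + Real.exp a * Mx) := by
  have hbound : ∀ k : ℕ, 1 ≤ k →
      eVariationOn x (Icc (-(k:ℝ)) (-(k:ℝ) + 1)) ≤
        ENNReal.ofReal (Real.exp a * (2 * Mh + Mx) + Real.exp a * Mx) := fun k hk => by
    have hsub : Icc (-(k:ℝ)) (-(k:ℝ) + 1) ⊆ Iic 0 := fun t ht => by
      have : (1:ℝ) ≤ k := by exact_mod_cast hk
      exact ht.2.trans (by linarith)
    have := eVariationOn_Icc_le_of_monotoneOn_exp_mul ha.le (by linarith)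
      (fun t ht => hMx t (hsub ht)) (fun t ht => hMh t (hsub ht)) (fun t ht => hpos t (hsub ht))
      (hmono.mono hsub) (fun t ht => hpos' t (hsub ht)) (hmono'.mono hsub)
    rwa [show -(k:ℝ) + 1 - -(k:ℝ) = 1 by ring, mul_one] at this
  exact ⟨⟨_, hbound⟩, hbound⟩

/-- if there is a bounded continuous `h` with `e^{a·}h` and
`e^{a·}(h - x)` nonnegative and nondecreasing on `(-∞,0]`, then the variations of
`x` on the intervals `[-k,-k+1]` are uniformly bounded; in fact
`V_{[-k,-k+1]}(x) ≤ e^a (2‖h‖_∞ + ‖x‖_∞) + e^a ‖x‖_∞` for bounds `Mh, Mx` of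
`h, x` respectively. -/
theorem stmt1 (a : ℝ) (ha : 0 < a) (x h : ℝ → ℝ)
    (hxcont : ContinuousOn x (Iic 0))
    (Mx : ℝ) (hMx : ∀ t ≤ (0:ℝ), |x t| ≤ Mx)
    (hhcont : ContinuousOn h (Iic 0))
    (Mh : ℝ) (hMh : ∀ t ≤ (0:ℝ), |h t| ≤ Mh)
    (hpos : ∀ t ≤ (0:ℝ), 0 ≤ Real.exp (a * t) * h t)
    (hmono : MonotoneOn (fun t => Real.exp (a * t) * h t) (Iic 0))
    (hpos' : ∀ t ≤ (0:ℝ), 0 ≤ Real.exp (a * t) * (h t - x t))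
    (hmono' : MonotoneOn (fun t => Real.exp (a * t) * (h t - x t)) (Iic 0)) :
    (∃ C : ℝ, ∀ k : ℕ, 1 ≤ k →
      eVariationOn x (Icc (-(k:ℝ)) (-(k:ℝ) + 1)) ≤ ENNReal.ofReal C) ∧
    ∀ k : ℕ, 1 ≤ k →
      eVariationOn x (Icc (-(k:ℝ)) (-(k:ℝ) + 1)) ≤
        ENNReal.ofReal (Real.exp a * (2 * Mh + Mx) + Real.exp a * Mx) :=
  stmt1_general a ha x h Mx hMx Mh hMh hpos hmono hpos' hmono'
end

section
/- Let $a>0$. The property that a bounded continuous function $x:(-\infty,0]\to\mathbb{R}$ admits a bounded continuous $h$ with $h\geq_A 0$ and $h\geq_A x$ (where $A=(-a)$) is independent of the choice of $a>0$; i.e., if it holds for some $a>0$ then it holds for every $a'>0$. -/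
/-!
For `a ≤ a'` nothing has to be done: `e^{a't} (h - x) = e^{(a'-a)t} · e^{at} (h - x)` is a product
of nonnegative nondecreasing functions on `(-∞, 0]`.

For `a' < a` put `c = a - a'`. If `e^{at} g(t)` is nondecreasing, then so is
`e^{a't} g(t) + c ∫_{-∞}^t e^{a'r} g(r) dr`: on `[s, t]` one has
`e^{a'r} g(r) ≥ e^{(a'-a)r} e^{as} g(s)`, and `c ∫_s^t e^{(a'-a)r} dr = e^{(a'-a)s} - e^{(a'-a)t}`
compensates exactly the decrease of the factor `e^{(a'-a)r}`. The correction
`K g(t) = c e^{-a't} ∫_{-∞}^t e^{a'r} g(r) dr` of a bounded continuous `g ≥ 0` is bounded,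
continuous, nonnegative, with `e^{a't} K g(t)` nondecreasing, so `h + K h + K (h - x)` dominates
both `0` and `x` in the order for `a'`.
-/

open Set MeasureTheory Real

/-- `ExpOrderLE a x y` is the exponential order `x ≤_A y` with `A = (-a)` on `(-∞, 0]`. -/
def ExpOrderLE (a : ℝ) (x y : ℝ → ℝ) : Prop :=
  (∀ t ≤ 0, x t ≤ y t) ∧ MonotoneOn (fun t => exp (a * t) * (y t - x t)) (Iic 0)

def BddContinuousOnNonpos (f : ℝ → ℝ) : Prop :=
  ContinuousOn f (Iic 0) ∧ ∃ M, ∀ t ≤ 0, |f t| ≤ M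

theorem expOrderLE_zero_left_iff {a : ℝ} {y : ℝ → ℝ} :
    ExpOrderLE a 0 y ↔ (∀ t ≤ 0, 0 ≤ y t) ∧ MonotoneOn (fun t => exp (a * t) * y t) (Iic 0) := by
  simp [ExpOrderLE]

theorem ExpOrderLE.of_exponent_le {a b : ℝ} (hab : a ≤ b) {x y : ℝ → ℝ} (h : ExpOrderLE a x y) :
    ExpOrderLE b x y := by
  refine ⟨h.1, ?_⟩
  have hexp : MonotoneOn (fun t => exp ((b - a) * t)) (Iic 0) :=
    (exp_monotone.comp (monotone_id.const_mul (sub_nonneg.2 hab))).monotoneOn _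
  refine (hexp.mul h.2 (fun _ _ => (exp_pos _).le)
    fun t ht => mul_nonneg (exp_pos _).le (sub_nonneg.2 (h.1 t ht))).congr fun t _ => ?_
  simp only [Pi.mul_apply]
  rw [← mul_assoc, ← exp_add]
  ring_nf

theorem BddContinuousOnNonpos.add {f g : ℝ → ℝ} (hf : BddContinuousOnNonpos f)
    (hg : BddContinuousOnNonpos g) : BddContinuousOnNonpos (f + g) := by
  obtain ⟨hfc, M, hM⟩ := hf
  obtain ⟨hgc, N, hN⟩ := hg
  exact ⟨hfc.add hgc, M + N, fun t ht => (abs_add_le _ _).trans (add_le_add (hM t ht) (hN t ht))⟩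

theorem BddContinuousOnNonpos.sub {f g : ℝ → ℝ} (hf : BddContinuousOnNonpos f)
    (hg : BddContinuousOnNonpos g) : BddContinuousOnNonpos (f - g) := by
  obtain ⟨hfc, M, hM⟩ := hf
  obtain ⟨hgc, N, hN⟩ := hg
  exact ⟨hfc.sub hgc, M + N, fun t ht => (abs_sub _ _).trans (add_le_add (hM t ht) (hN t ht))⟩

theorem integral_exp_mul_of_ne_zero {k : ℝ} (hk : k ≠ 0) (s t : ℝ) :
    ∫ r in s..t, exp (k * r) = (exp (k * t) - exp (k * s)) / k := by
  rw [intervalIntegral.integral_comp_mul_left (fun r => exp r) hk, integral_exp, smul_eq_mul,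
    inv_mul_eq_div]

theorem integrableOn_exp_mul_mul_Iic {b : ℝ} (hb : 0 < b) {g : ℝ → ℝ}
    (hg : BddContinuousOnNonpos g) : IntegrableOn (fun r => exp (b * r) * g r) (Iic 0) := by
  obtain ⟨hgc, M, hM⟩ := hg
  exact (integrableOn_exp_mul_Iic hb 0).mul_bdd (c := M)
    (hgc.aestronglyMeasurable measurableSet_Iic) (ae_restrict_of_forall_mem measurableSet_Iic hM)

theorem monotoneOn_exp_mul_add_integral_Iic {a b : ℝ} (hba : b < a) {g : ℝ → ℝ}
    (hgm : MonotoneOn (fun t => exp (a * t) * g t) (Iic 0))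
    (hint : IntegrableOn (fun r => exp (b * r) * g r) (Iic 0)) :
    MonotoneOn (fun t => exp (b * t) * g t + (a - b) * ∫ r in Iic t, exp (b * r) * g r)
      (Iic 0) := by
  intro s (hs : s ≤ 0) t (ht : t ≤ 0) hst
  set u := exp (a * s) * g s
  have hsplit : ∀ r, exp (b * r) * g r = exp ((b - a) * r) * (exp (a * r) * g r) := fun r => by
    rw [← mul_assoc, ← exp_add]
    ring_nf
  have hlow : ∀ r ∈ Icc s t, exp ((b - a) * r) * u ≤ exp (b * r) * g r := fun r hr => by
    rw [hsplit]
    exact mul_le_mul_of_nonneg_left (hgm hs (hr.2.trans ht) hr.1) (exp_pos _).le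
  have hdiff : (∫ r in Iic t, exp (b * r) * g r) - ∫ r in Iic s, exp (b * r) * g r =
      ∫ r in s..t, exp (b * r) * g r :=
    intervalIntegral.integral_Iic_sub_Iic (hint.mono_set (Iic_subset_Iic.2 hs))
      (hint.mono_set (Iic_subset_Iic.2 ht))
  have hint_lower : (exp ((b - a) * t) - exp ((b - a) * s)) / (b - a) * u ≤
      ∫ r in s..t, exp (b * r) * g r := by
    rw [← integral_exp_mul_of_ne_zero (sub_ne_zero.2 hba.ne), ← intervalIntegral.integral_mul_const]
    refine intervalIntegral.integral_mono_on hst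
      ((by fun_prop : Continuous _).intervalIntegrable _ _) ?_ hlow
    exact (intervalIntegrable_iff_integrableOn_Icc_of_le hst).2
      (hint.mono_set fun r hr => hr.2.trans ht)
  have hcomp : (a - b) * ((exp ((b - a) * t) - exp ((b - a) * s)) / (b - a) * u) =
      exp ((b - a) * s) * u - exp ((b - a) * t) * u := by
    have hne : b - a ≠ 0 := sub_ne_zero.2 hba.ne
    rw [show a - b = -(b - a) by ring]
    field_simp
    ring
  have hgain : exp ((b - a) * s) * u - exp ((b - a) * t) * u ≤
      (a - b) * (∫ r in Iic t, exp (b * r) * g r) - (a - b) * ∫ r in Iic s, exp (b * r) * g r := by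
    rw [← mul_sub, hdiff, ← hcomp]
    exact mul_le_mul_of_nonneg_left hint_lower (sub_nonneg.2 hba.le)
  have hs_eq : exp (b * s) * g s = exp ((b - a) * s) * u := hsplit s
  have ht_ge := hlow t ⟨hst, le_rfl⟩
  dsimp only
  linarith

noncomputable def expCorrection (a b : ℝ) (g : ℝ → ℝ) (t : ℝ) : ℝ :=
  (a - b) * exp (-(b * t)) * ∫ r in Iic t, exp (b * r) * g r

section expCorrection

variable {a b : ℝ} {g : ℝ → ℝ}

theorem exp_mul_expCorrection (t : ℝ) :
    exp (b * t) * expCorrection a b g t = (a - b) * ∫ r in Iic t, exp (b * r) * g r := by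
  rw [expCorrection, exp_neg]
  field_simp

theorem expCorrection_nonneg (hba : b ≤ a) (hg0 : ∀ t ≤ 0, 0 ≤ g t) {t : ℝ} (ht : t ≤ 0) :
    0 ≤ expCorrection a b g t :=
  mul_nonneg (mul_nonneg (sub_nonneg.2 hba) (exp_pos _).le)
    (setIntegral_nonneg measurableSet_Iic fun r hr =>
      mul_nonneg (exp_pos _).le (hg0 r (hr.trans ht)))

theorem monotoneOn_exp_mul_expCorrection (hba : b ≤ a) (hg0 : ∀ t ≤ 0, 0 ≤ g t)
    (hint : IntegrableOn (fun r => exp (b * r) * g r) (Iic 0)) :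
    MonotoneOn (fun t => exp (b * t) * expCorrection a b g t) (Iic 0) := by
  intro s _ t (ht : t ≤ 0) hst
  simp only [exp_mul_expCorrection]
  refine mul_le_mul_of_nonneg_left ?_ (sub_nonneg.2 hba)
  refine setIntegral_mono_set (hint.mono_set (Iic_subset_Iic.2 ht)) ?_
    (Iic_subset_Iic.2 hst).eventuallyLE
  exact ae_restrict_of_forall_mem measurableSet_Iic fun r hr =>
    mul_nonneg (exp_pos _).le (hg0 r (hr.trans ht))

theorem abs_expCorrection_le (hb : 0 < b) (hba : b ≤ a) {M : ℝ} (hM : ∀ t ≤ 0, |g t| ≤ M)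
    {t : ℝ} (ht : t ≤ 0) : |expCorrection a b g t| ≤ (a - b) * M / b := by
  have hint : ‖∫ r in Iic t, exp (b * r) * g r‖ ≤ ∫ r in Iic t, exp (b * r) * M := by
    refine norm_integral_le_of_norm_le ((integrableOn_exp_mul_Iic hb t).mul_const M) ?_
    refine ae_restrict_of_forall_mem measurableSet_Iic fun r (hr : r ≤ t) => ?_
    rw [norm_mul, norm_of_nonneg (exp_pos _).le, Real.norm_eq_abs]
    exact mul_le_mul_of_nonneg_left (hM r (hr.trans ht)) (exp_pos _).le
  rw [integral_mul_const, integral_exp_mul_Iic hb, Real.norm_eq_abs] at hint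
  rw [expCorrection, abs_mul, abs_of_nonneg (mul_nonneg (sub_nonneg.2 hba) (exp_pos _).le)]
  calc (a - b) * exp (-(b * t)) * |∫ r in Iic t, exp (b * r) * g r|
      ≤ (a - b) * exp (-(b * t)) * (exp (b * t) / b * M) := by gcongr
    _ = (a - b) * M / b := by rw [exp_neg]; field_simp

theorem BddContinuousOnNonpos.expCorrection (hb : 0 < b) (hba : b ≤ a)
    (hg : BddContinuousOnNonpos g) : BddContinuousOnNonpos (expCorrection a b g) := by
  obtain ⟨M, hM⟩ := hg.2
  refine ⟨?_, (a - b) * M / b, fun t ht => abs_expCorrection_le hb hba hM ht⟩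
  exact (Continuous.continuousOn (by fun_prop)).mul
    (integrableOn_exp_mul_mul_Iic hb hg).continuousOn_Iic_primitive_Iic

end expCorrection

theorem ExpOrderLE.add_expCorrection_add {a b : ℝ} (hba : b < a) {x y k : ℝ → ℝ}
    (hxy : ExpOrderLE a x y) (hint : IntegrableOn (fun r => exp (b * r) * (y - x) r) (Iic 0))
    (hk0 : ∀ t ≤ 0, 0 ≤ k t) (hkm : MonotoneOn (fun t => exp (b * t) * k t) (Iic 0)) :
    ExpOrderLE b x (y + expCorrection a b (y - x) + k) := by
  have hyx : ∀ t ≤ 0, 0 ≤ (y - x) t := fun t ht => sub_nonneg.2 (hxy.1 t ht)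
  refine ⟨fun t ht => ?_, ?_⟩
  · have := expCorrection_nonneg hba.le hyx ht
    simp only [Pi.add_apply]
    linarith [hxy.1 t ht, hk0 t ht]
  · refine ((monotoneOn_exp_mul_add_integral_Iic (g := y - x) hba hxy.2 hint).add hkm).congr
      fun t _ => ?_
    dsimp only
    rw [← exp_mul_expCorrection]
    simp only [Pi.add_apply, Pi.sub_apply]
    ring

theorem exists_expOrderLE_of_pos {a b : ℝ} (hb : 0 < b) {x₁ x₂ y : ℝ → ℝ}
    (hy : BddContinuousOnNonpos y) (hx₁ : BddContinuousOnNonpos x₁)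
    (hx₂ : BddContinuousOnNonpos x₂) (h₁ : ExpOrderLE a x₁ y) (h₂ : ExpOrderLE a x₂ y) :
    ∃ y', BddContinuousOnNonpos y' ∧ ExpOrderLE b x₁ y' ∧ ExpOrderLE b x₂ y' := by
  rcases le_or_gt a b with hab | hba
  · exact ⟨y, hy, h₁.of_exponent_le hab, h₂.of_exponent_le hab⟩
  have hg₁ := hy.sub hx₁
  have hg₂ := hy.sub hx₂
  have hint₁ := integrableOn_exp_mul_mul_Iic hb hg₁
  have hint₂ := integrableOn_exp_mul_mul_Iic hb hg₂
  have hyx₁ : ∀ t ≤ 0, 0 ≤ (y - x₁) t := fun t ht => sub_nonneg.2 (h₁.1 t ht)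
  have hyx₂ : ∀ t ≤ 0, 0 ≤ (y - x₂) t := fun t ht => sub_nonneg.2 (h₂.1 t ht)
  refine ⟨y + expCorrection a b (y - x₁) + expCorrection a b (y - x₂),
    (hy.add (hg₁.expCorrection hb hba.le)).add (hg₂.expCorrection hb hba.le),
    h₁.add_expCorrection_add hba hint₁ (fun _ => expCorrection_nonneg hba.le hyx₂)
      (monotoneOn_exp_mul_expCorrection hba.le hyx₂ hint₂), ?_⟩
  rw [add_right_comm]
  exact h₂.add_expCorrection_add hba hint₂ (fun _ => expCorrection_nonneg hba.le hyx₁)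
    (monotoneOn_exp_mul_expCorrection hba.le hyx₁ hint₁)

theorem stmt3_general (a a' : ℝ) (ha' : 0 < a') (x : ℝ → ℝ)
    (hxcont : ContinuousOn x (Iic 0))
    (hxbdd : ∃ Mx : ℝ, ∀ t ≤ (0:ℝ), |x t| ≤ Mx)
    (hyp : ∃ h : ℝ → ℝ, ContinuousOn h (Iic 0) ∧
      (∃ Mh : ℝ, ∀ t ≤ (0:ℝ), |h t| ≤ Mh) ∧
      (∀ t ≤ (0:ℝ), 0 ≤ h t) ∧
      MonotoneOn (fun t => Real.exp (a * t) * h t) (Iic 0) ∧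
      (∀ t ≤ (0:ℝ), x t ≤ h t) ∧
      MonotoneOn (fun t => Real.exp (a * t) * (h t - x t)) (Iic 0)) :
    ∃ h : ℝ → ℝ, ContinuousOn h (Iic 0) ∧
      (∃ Mh : ℝ, ∀ t ≤ (0:ℝ), |h t| ≤ Mh) ∧
      (∀ t ≤ (0:ℝ), 0 ≤ h t) ∧
      MonotoneOn (fun t => Real.exp (a' * t) * h t) (Iic 0) ∧
      (∀ t ≤ (0:ℝ), x t ≤ h t) ∧
      MonotoneOn (fun t => Real.exp (a' * t) * (h t - x t)) (Iic 0) := by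
  obtain ⟨h, hhc, hhb, hh0, hhm, hhx, hhxm⟩ := hyp
  obtain ⟨k, ⟨hkc, hkb⟩, hk0, hkx⟩ := exists_expOrderLE_of_pos (x₁ := 0) ha' ⟨hhc, hhb⟩
    ⟨continuousOn_const, 0, by simp⟩ ⟨hxcont, hxbdd⟩ (expOrderLE_zero_left_iff.2 ⟨hh0, hhm⟩)
    ⟨hhx, hhxm⟩
  obtain ⟨hk0, hkm⟩ := expOrderLE_zero_left_iff.1 hk0
  exact ⟨k, hkc, hkb, hk0, hkm, hkx.1, hkx.2⟩

/-- the property of admitting a bounded continuous `h` with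
`h ≥_A 0` and `h ≥_A x` (exponential order for `A = (-a)`) is independent of the
choice of `a > 0`. -/
theorem stmt3 (a a' : ℝ) (ha : 0 < a) (ha' : 0 < a') (x : ℝ → ℝ)
    (hxcont : ContinuousOn x (Iic 0))
    (hxbdd : ∃ Mx : ℝ, ∀ t ≤ (0:ℝ), |x t| ≤ Mx)
    (hyp : ∃ h : ℝ → ℝ, ContinuousOn h (Iic 0) ∧
      (∃ Mh : ℝ, ∀ t ≤ (0:ℝ), |h t| ≤ Mh) ∧
      (∀ t ≤ (0:ℝ), 0 ≤ h t) ∧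
      MonotoneOn (fun t => Real.exp (a * t) * h t) (Iic 0) ∧
      (∀ t ≤ (0:ℝ), x t ≤ h t) ∧
      MonotoneOn (fun t => Real.exp (a * t) * (h t - x t)) (Iic 0)) :
    ∃ h : ℝ → ℝ, ContinuousOn h (Iic 0) ∧
      (∃ Mh : ℝ, ∀ t ≤ (0:ℝ), |h t| ≤ Mh) ∧
      (∀ t ≤ (0:ℝ), 0 ≤ h t) ∧
      MonotoneOn (fun t => Real.exp (a' * t) * h t) (Iic 0) ∧
      (∀ t ≤ (0:ℝ), x t ≤ h t) ∧
      MonotoneOn (fun t => Real.exp (a' * t) * (h t - x t)) (Iic 0) :=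
  stmt3_general a a' ha' x hxcont hxbdd hyp
end

section
/- Let $a>0$ and let $x_0:(-\infty,0]\to\mathbb{R}$ be a bounded continuous function with $\sup_{k\geq 1}V_{[-k,-k+1]}(x_0)<\infty$. Then there exists a bounded continuous function $h_0:(-\infty,0]\to\mathbb{R}$ such that, for $A=(-a)$, $h_0\geq_A 0$, $h_0\geq_A x_0$, and $h_0\geq_A x_0 - x_0(0)$, where $x_0(0)$ denotes the constant function with value $x_0(0)$. -/
open Set Filter Real

/-!
The weighted function `f t = exp (a * t) * x₀ t` has variation at most `(c + M) * exp (-a * k)` on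
`[-k-1, -k]` (product rule for variations), and these bounds sum geometrically, so its variation
`G t` on `(-∞, t]` is `O(exp (a * t))`. Being the variation function of a continuous function of
bounded variation, `G` is continuous, and `G`, `G + f` are nondecreasing (Jordan decomposition).
Hence `w = exp (-a * t) * G t` is bounded and nonnegative, and `h₀ = x₀ + w + M` works, where
`M = ‖x₀‖∞`: each of the three weighted differences `exp (a * t) * (h₀ - ·)` is `G + f` or `G`,
plus a nonnegative multiple of `exp (a * t)`.
-/

section VariationOnIic

variable {α : Type*} [LinearOrder α] {E : Type*} [PseudoEMetricSpace E]

theorem eVariationOn_Iic_eq_add (f : α → E) {s t : α} (hst : s ≤ t) :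
    eVariationOn f (Iic t) = eVariationOn f (Iic s) + eVariationOn f (Icc s t) := by
  rw [← eVariationOn.union f isGreatest_Iic (isLeast_Icc hst), Iic_union_Icc_eq_Iic hst]

variable {f : α → ℝ} {b s t : α}

theorem toReal_eVariationOn_Iic_eq_add (hf : BoundedVariationOn f (Iic b)) (hst : s ≤ t)
    (htb : t ≤ b) :
    (eVariationOn f (Iic t)).toReal =
      (eVariationOn f (Iic s)).toReal + (eVariationOn f (Icc s t)).toReal := by
  have hfin : ∀ u : Set α, u ⊆ Iic b → eVariationOn f u ≠ ⊤ := fun u hu =>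
    ne_top_of_le_ne_top hf (eVariationOn.mono f hu)
  rw [eVariationOn_Iic_eq_add f hst, ENNReal.toReal_add
    (hfin _ (Iic_subset_Iic.2 (hst.trans htb))) (hfin _ (Icc_subset_Iic_self.trans
      (Iic_subset_Iic.2 htb)))]

theorem monotoneOn_toReal_eVariationOn_Iic_add (hf : BoundedVariationOn f (Iic b)) :
    MonotoneOn (fun t => (eVariationOn f (Iic t)).toReal + f t) (Iic b) := by
  intro s _ t ht hst
  have hIcc : BoundedVariationOn f (Icc s t) :=
    ne_top_of_le_ne_top hf (eVariationOn.mono f (Icc_subset_Iic_self.trans (Iic_subset_Iic.2 ht)))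
  have := hIcc.sub_le (left_mem_Icc.2 hst) (right_mem_Icc.2 hst)
  simp only
  rw [toReal_eVariationOn_Iic_eq_add hf hst ht]
  linarith

theorem monotoneOn_toReal_eVariationOn_Iic (hf : BoundedVariationOn f (Iic b)) :
    MonotoneOn (fun t => (eVariationOn f (Iic t)).toReal) (Iic b) := by
  intro s _ t ht hst
  simp only
  rw [toReal_eVariationOn_Iic_eq_add hf hst ht]
  exact le_add_of_nonneg_right ENNReal.toReal_nonneg

theorem dist_toReal_eVariationOn_Iic_le (hf : BoundedVariationOn f (Iic b)) (hs : s ≤ b)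
    (ht : t ≤ b) :
    dist (eVariationOn f (Iic s)).toReal (eVariationOn f (Iic t)).toReal ≤
      (eVariationOn f (Iic b ∩ Icc s t)).toReal + (eVariationOn f (Iic b ∩ Icc t s)).toReal := by
  rcases le_total s t with hst | hts
  · rw [toReal_eVariationOn_Iic_eq_add hf hst ht, dist_comm, Real.dist_eq, add_sub_cancel_left,
      abs_of_nonneg ENNReal.toReal_nonneg,
      inter_eq_right.2 (Icc_subset_Iic_self.trans (Iic_subset_Iic.2 ht))]
    exact le_add_of_nonneg_right ENNReal.toReal_nonneg
  · rw [toReal_eVariationOn_Iic_eq_add hf hts hs, Real.dist_eq, add_sub_cancel_left,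
      abs_of_nonneg ENNReal.toReal_nonneg,
      inter_eq_right.2 (Icc_subset_Iic_self.trans (Iic_subset_Iic.2 hs))]
    exact le_add_of_nonneg_left ENNReal.toReal_nonneg

theorem continuousOn_toReal_eVariationOn_Iic [TopologicalSpace α] [OrderTopology α]
    (hf : BoundedVariationOn f (Iic b)) (hc : ContinuousOn f (Iic b)) :
    ContinuousOn (fun t => (eVariationOn f (Iic t)).toReal) (Iic b) := by
  intro x hx
  rw [ContinuousWithinAt, tendsto_iff_dist_tendsto_zero]
  have hleft := hf.tendsto_eVariationOn_Icc_zero_left ((hc x hx).mono inter_subset_left)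
  have hright := hf.tendsto_eVariationOn_Icc_zero_right x ((hc x hx).mono inter_subset_left)
  have hsum := ((ENNReal.tendsto_toReal ENNReal.zero_ne_top).comp hleft).add
    ((ENNReal.tendsto_toReal ENNReal.zero_ne_top).comp hright)
  rw [ENNReal.toReal_zero, add_zero] at hsum
  refine squeeze_zero' (Eventually.of_forall fun _ => dist_nonneg) ?_ hsum
  filter_upwards [self_mem_nhdsWithin] with y hy
  exact dist_toReal_eVariationOn_Iic_le hf hy hx

end VariationOnIic

section GeometricDecay

variable {f : ℝ → ℝ} {D q : ℝ}

theorem eVariationOn_Icc_le_of_geometric (hD : 0 ≤ D) (hq0 : 0 ≤ q) (hq1 : q < 1)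
    (hunit : ∀ k : ℕ, eVariationOn f (Icc (-(k + 1 : ℝ)) (-k)) ≤ ENNReal.ofReal (D * q ^ k))
    (n k : ℕ) :
    eVariationOn f (Icc (-(k + n : ℝ)) (-k)) ≤ ENNReal.ofReal (D / (1 - q) * q ^ k) := by
  induction n generalizing k with
  | zero => simp
  | succ n ih =>
    have hsplit := eVariationOn.Icc_add_Icc f (s := univ)
      (a := -(k + (n + 1) : ℝ)) (b := -(k + 1 : ℝ)) (c := -k) (by linarith) (by linarith)
      (mem_univ _)
    simp only [univ_inter] at hsplit
    have hfar := ih (k + 1)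
    rw [Nat.cast_succ, show (k : ℝ) + 1 + n = k + (n + 1) by ring] at hfar
    have hq : 0 < 1 - q := by linarith
    calc eVariationOn f (Icc (-(k + (n + 1 : ℕ) : ℝ)) (-k))
        ≤ ENNReal.ofReal (D / (1 - q) * q ^ (k + 1)) + ENNReal.ofReal (D * q ^ k) := by
          push_cast
          exact hsplit ▸ add_le_add hfar (hunit k)
      _ = ENNReal.ofReal (D / (1 - q) * q ^ k) := by
        rw [← ENNReal.ofReal_add (by positivity) (by positivity)]
        congr 1
        field_simp
        ring

theorem eVariationOn_Iic_le_of_geometric (hD : 0 ≤ D) (hq0 : 0 ≤ q) (hq1 : q < 1)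
    (hunit : ∀ k : ℕ, eVariationOn f (Icc (-(k + 1 : ℝ)) (-k)) ≤ ENNReal.ofReal (D * q ^ k))
    (k : ℕ) :
    eVariationOn f (Iic (-k : ℝ)) ≤ ENNReal.ofReal (D / (1 - q) * q ^ k) := by
  rw [eVariationOn.eq_biSup_inter_Icc]
  refine iSup₂_le fun p hp => ?_
  have hsub : Iic (-k : ℝ) ∩ Icc p.1 p.2 ⊆ Icc (-(k + ⌈-k - p.1⌉₊ : ℝ)) (-k) := fun x hx =>
    ⟨by linarith [Nat.le_ceil (-k - p.1), hx.2.1], hx.1⟩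
  exact (eVariationOn.mono f hsub).trans
    (eVariationOn_Icc_le_of_geometric hD hq0 hq1 hunit _ k)

end GeometricDecay

section ExponentialWeight

variable {a c M : ℝ} {x₀ : ℝ → ℝ}

theorem eVariationOn_exp_mul_Icc_le (ha : 0 ≤ a) (hc : 0 ≤ c) (hM : ∀ t ≤ (0 : ℝ), |x₀ t| ≤ M)
    {k : ℕ} (hvar : eVariationOn x₀ (Icc (-(k + 1 : ℝ)) (-k)) ≤ ENNReal.ofReal c) :
    eVariationOn (fun t => exp (a * t) * x₀ t) (Icc (-(k + 1 : ℝ)) (-k)) ≤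
      ENNReal.ofReal ((c + M) * exp (-a) ^ k) := by
  have hM0 : 0 ≤ M := (abs_nonneg _).trans (hM 0 le_rfl)
  have hexp : ∀ t ∈ Icc (-(k + 1 : ℝ)) (-k), ‖exp (a * t)‖ₑ ≤ ENNReal.ofReal (exp (-a) ^ k) := by
    intro t ht
    rw [← Real.exp_nat_mul, Real.enorm_eq_ofReal (exp_pos _).le]
    exact ENNReal.ofReal_le_ofReal (exp_le_exp.2 (by nlinarith [ht.2]))
  have hx₀ : ∀ t ∈ Icc (-(k + 1 : ℝ)) (-k), ‖x₀ t‖ₑ ≤ ENNReal.ofReal M := fun t ht => by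
    rw [← ofReal_norm]
    exact ENNReal.ofReal_le_ofReal (hM t (by linarith [ht.2, k.cast_nonneg (α := ℝ)]))
  have hmono : Monotone fun t => exp (a * t) := fun s t hst => exp_le_exp.2 (by nlinarith)
  have hexpvar := (hmono.monotoneOn univ).eVariationOn_eq (mem_univ (-(k + 1 : ℝ)))
    (mem_univ (-k : ℝ))
  rw [univ_inter] at hexpvar
  calc _ ≤ ENNReal.ofReal (exp (-a) ^ k) * ENNReal.ofReal c +
        ENNReal.ofReal M * ENNReal.ofReal (exp (-a) ^ k) := by
        refine (eVariationOn_fun_mul_le hexp hx₀).trans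
          (add_le_add (mul_le_mul_right hvar _) (mul_le_mul_right ?_ _))
        rw [hexpvar]
        refine ENNReal.ofReal_le_ofReal ?_
        rw [← Real.exp_nat_mul, show (k : ℝ) * -a = a * -k by ring]
        linarith [exp_pos (a * -(k + 1 : ℝ))]
    _ = ENNReal.ofReal ((c + M) * exp (-a) ^ k) := by
        rw [← ENNReal.ofReal_mul (by positivity), ← ENNReal.ofReal_mul hM0,
          ← ENNReal.ofReal_add (by positivity) (by positivity)]
        ring_nf

theorem exists_eVariationOn_exp_mul_Iic_le (ha : 0 < a) (hM : ∀ t ≤ (0 : ℝ), |x₀ t| ≤ M)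
    (hvar : ∃ c : ℝ, ∀ k : ℕ, 1 ≤ k →
      eVariationOn x₀ (Icc (-(k : ℝ)) (-(k : ℝ) + 1)) ≤ ENNReal.ofReal c) :
    ∃ K, 0 ≤ K ∧ ∀ t ≤ (0 : ℝ),
      eVariationOn (fun t => exp (a * t) * x₀ t) (Iic t) ≤ ENNReal.ofReal (K * exp (a * t)) := by
  obtain ⟨c, hc⟩ := hvar
  have hM0 : 0 ≤ M := (abs_nonneg _).trans (hM 0 le_rfl)
  have hunit (k : ℕ) : eVariationOn (fun t => exp (a * t) * x₀ t) (Icc (-(k + 1 : ℝ)) (-k)) ≤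
      ENNReal.ofReal ((max c 0 + M) * exp (-a) ^ k) := by
    refine eVariationOn_exp_mul_Icc_le ha.le (le_max_right c 0) hM ?_
    have := hc (k + 1) (by omega)
    push_cast at this
    rw [show -((k : ℝ) + 1) + 1 = -k by ring] at this
    exact this.trans (ENNReal.ofReal_le_ofReal (le_max_left c 0))
  have hq1 : exp (-a) < 1 := exp_lt_one_iff.2 (neg_neg_of_pos ha)
  have hK : 0 ≤ (max c 0 + M) / (1 - exp (-a)) := div_nonneg (by positivity) (by linarith)
  refine ⟨(max c 0 + M) / (1 - exp (-a)) * exp a, by positivity, fun t ht => ?_⟩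
  set k := ⌊-t⌋₊
  have hk : -(k : ℝ) ≤ t + 1 := by linarith [Nat.lt_floor_add_one (-t)]
  calc _ ≤ eVariationOn (fun t => exp (a * t) * x₀ t) (Iic (-k : ℝ)) :=
        eVariationOn.mono _ (Iic_subset_Iic.2 (by linarith [Nat.floor_le (neg_nonneg.2 ht)]))
    _ ≤ ENNReal.ofReal ((max c 0 + M) / (1 - exp (-a)) * exp (-a) ^ k) :=
        eVariationOn_Iic_le_of_geometric (by positivity) (exp_pos _).le hq1 hunit k
    _ ≤ _ := by
        rw [mul_assoc, ← Real.exp_nat_mul, ← Real.exp_add]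
        gcongr
        nlinarith

theorem exists_exp_weighted_jordan_decomposition (ha : 0 < a) (hcont : ContinuousOn x₀ (Iic 0))
    (hM : ∀ t ≤ (0 : ℝ), |x₀ t| ≤ M)
    (hvar : ∃ c : ℝ, ∀ k : ℕ, 1 ≤ k →
      eVariationOn x₀ (Icc (-(k : ℝ)) (-(k : ℝ) + 1)) ≤ ENNReal.ofReal c) :
    ∃ K : ℝ, ∃ w : ℝ → ℝ, ContinuousOn w (Iic 0) ∧ (∀ t ≤ (0 : ℝ), 0 ≤ w t ∧ w t ≤ K) ∧
      MonotoneOn (fun t => exp (a * t) * w t) (Iic 0) ∧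
      MonotoneOn (fun t => exp (a * t) * (x₀ t + w t)) (Iic 0) := by
  obtain ⟨K, hK0, hK⟩ := exists_eVariationOn_exp_mul_Iic_le ha hM hvar
  set f : ℝ → ℝ := fun t => exp (a * t) * x₀ t
  set G : ℝ → ℝ := fun t => (eVariationOn f (Iic t)).toReal
  have hf : BoundedVariationOn f (Iic 0) :=
    ne_top_of_le_ne_top ENNReal.ofReal_ne_top (hK 0 le_rfl)
  have hcancel (t : ℝ) : exp (a * t) * exp (-(a * t)) = 1 := by
    rw [← exp_add, add_neg_cancel, exp_zero]
  refine ⟨K, fun t => exp (-(a * t)) * G t,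
    (continuous_exp.comp (continuous_const_mul a).neg).continuousOn.mul
      (continuousOn_toReal_eVariationOn_Iic hf (by fun_prop)),
    fun t ht => ⟨by positivity, ?_⟩, (monotoneOn_toReal_eVariationOn_Iic hf).congr fun t _ => ?_,
    (monotoneOn_toReal_eVariationOn_Iic_add hf).congr fun t _ => ?_⟩
  · calc exp (-(a * t)) * G t ≤ exp (-(a * t)) * (K * exp (a * t)) := by
          gcongr
          exact ENNReal.toReal_le_of_le_ofReal (by positivity) (hK t ht)
      _ = K := by linear_combination K * hcancel t
  · linear_combination (-G t) * hcancel t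
  · linear_combination (-G t) * hcancel t

end ExponentialWeight

theorem monotone_const_mul_exp_mul {a m : ℝ} (ha : 0 ≤ a) (hm : 0 ≤ m) :
    Monotone fun t => m * exp (a * t) :=
  fun _ _ hst => mul_le_mul_of_nonneg_left (exp_le_exp.2 (mul_le_mul_of_nonneg_left hst ha)) hm

/-- Lemma `h0`: if `x₀` is bounded continuous on `(-∞,0]` with
uniformly bounded variation on the intervals `[-k,-k+1]`, then there exists a
bounded continuous `h₀` with `h₀ ≥_A 0`, `h₀ ≥_A x₀` and `h₀ ≥_A x₀ - x₀(0)`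
for the exponential order with `A = (-a)`. -/
theorem stmt4 (a : ℝ) (ha : 0 < a) (x₀ : ℝ → ℝ)
    (hcont : ContinuousOn x₀ (Iic 0))
    (hbdd : ∃ M : ℝ, ∀ t ≤ (0:ℝ), |x₀ t| ≤ M)
    (hvar : ∃ c : ℝ, ∀ k : ℕ, 1 ≤ k →
      eVariationOn x₀ (Icc (-(k:ℝ)) (-(k:ℝ) + 1)) ≤ ENNReal.ofReal c) :
    ∃ h₀ : ℝ → ℝ, ContinuousOn h₀ (Iic 0) ∧
      (∃ Mh : ℝ, ∀ t ≤ (0:ℝ), |h₀ t| ≤ Mh) ∧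
      -- h₀ ≥_A 0
      (∀ t ≤ (0:ℝ), 0 ≤ h₀ t) ∧
      MonotoneOn (fun t => Real.exp (a * t) * h₀ t) (Iic 0) ∧
      -- h₀ ≥_A x₀
      (∀ t ≤ (0:ℝ), x₀ t ≤ h₀ t) ∧
      MonotoneOn (fun t => Real.exp (a * t) * (h₀ t - x₀ t)) (Iic 0) ∧
      -- h₀ ≥_A x₀ - x₀(0)
      (∀ t ≤ (0:ℝ), x₀ t - x₀ 0 ≤ h₀ t) ∧
      MonotoneOn (fun t => Real.exp (a * t) * (h₀ t - (x₀ t - x₀ 0))) (Iic 0) := by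
  obtain ⟨M, hM⟩ := hbdd
  have hM0 : 0 ≤ M := (abs_nonneg _).trans (hM 0 le_rfl)
  have hx₀ (t : ℝ) (ht : t ≤ 0) : -M ≤ x₀ t := (abs_le.1 (hM t ht)).1
  obtain ⟨K, w, hwc, hwK, hw, hxw⟩ :=
    exists_exp_weighted_jordan_decomposition ha hcont hM hvar
  have hexp (m : ℝ) (hm : 0 ≤ m) : MonotoneOn (fun t => m * exp (a * t)) (Iic 0) :=
    (monotone_const_mul_exp_mul ha.le hm).monotoneOn _
  refine ⟨fun t => x₀ t + w t + M, (hcont.add hwc).add continuousOn_const,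
    ⟨M + K + M, fun t ht => abs_le.2 ⟨by linarith [hx₀ t ht, hwK t ht],
      by linarith [le_abs_self (x₀ t), hM t ht, hwK t ht]⟩⟩,
    fun t ht => by linarith [hx₀ t ht, hwK t ht], ?_, fun t ht => by linarith [hwK t ht], ?_,
    fun t ht => by linarith [hx₀ 0 le_rfl, hwK t ht], ?_⟩
  · exact (hxw.add (hexp M hM0)).congr fun t _ => by ring
  · exact (hw.add (hexp M hM0)).congr fun t _ => by ring
  · exact (hw.add (hexp (M + x₀ 0) (by linarith [hx₀ 0 le_rfl]))).congr fun t _ => by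
      ring
end

section
/- There exists a bounded continuous function $x:(-\infty,0]\to\mathbb{R}$ satisfying $\sup_{k\geq 1}V_{[-k,-k+1]}(x)<\infty$ which is not uniformly continuous. -/
/-!
Put a tent of height `1` at every integer: `x t = max 0 (1 - |t| * dist(t, ℤ))`, whose tent at
`-k` has half-width about `1 / k`. Between two consecutive integers `x` first decreases and then
increases, so its variation on each `[-k, -k + 1]` is at most `2`; but `x (-k) = 1` and
`x (-k - 1 / k) = 0` at points only `1 / k` apart, so `x` is not uniformly continuous.
-/

open Set Metric

lemma AntitoneOn.eVariationOn_le {α : Type*} [LinearOrder α] {f : α → ℝ} {s : Set α}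
    (hf : AntitoneOn f s) {a b : α} (as : a ∈ s) (bs : b ∈ s) :
    eVariationOn f (s ∩ Icc a b) ≤ ENNReal.ofReal (f a - f b) :=
  calc eVariationOn f (s ∩ Icc a b) = eVariationOn ((-id) ∘ fun t => -f t) (s ∩ Icc a b) := by
        congr 1; funext t; simp
    _ ≤ 1 * eVariationOn (fun t => -f t) (s ∩ Icc a b) :=
        (LipschitzWith.id.neg.lipschitzOnWith).comp_eVariationOn_le (mapsTo_univ _ _)
    _ = ENNReal.ofReal (f a - f b) := by
        rw [one_mul, hf.neg.eVariationOn_eq as bs, neg_sub_neg]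

lemma eVariationOn_Icc_le_of_antitoneOn_of_monotoneOn {f : ℝ → ℝ} {a m b : ℝ}
    (ham : a ≤ m) (hmb : m ≤ b) (hf₁ : AntitoneOn f (Icc a m)) (hf₂ : MonotoneOn f (Icc m b)) :
    eVariationOn f (Icc a b) ≤ ENNReal.ofReal (f a - f m) + ENNReal.ofReal (f b - f m) := by
  have hsplit := eVariationOn.Icc_add_Icc f ham hmb (mem_univ m)
  simp only [univ_inter] at hsplit
  rw [← hsplit]
  gcongr
  · simpa using hf₁.eVariationOn_le (left_mem_Icc.2 ham) (right_mem_Icc.2 ham)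
  · simpa using (hf₂.eVariationOn_eq (left_mem_Icc.2 hmb) (right_mem_Icc.2 hmb)).le

noncomputable def distToInt (t : ℝ) : ℝ := infDist t (range ((↑) : ℤ → ℝ))

lemma distToInt_eq_min {n : ℤ} {t : ℝ} (ht : t ∈ Icc (n : ℝ) (n + 1)) :
    distToInt t = min (t - n) (n + 1 - t) := by
  obtain ⟨hnt, htn⟩ := ht
  refine le_antisymm (le_min ?_ ?_) ?_
  · simpa [distToInt, Real.dist_eq, abs_of_nonneg (sub_nonneg.2 hnt)]
      using infDist_le_dist_of_mem (x := t) (mem_range_self (f := ((↑) : ℤ → ℝ)) n)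
  · simpa [distToInt, Real.dist_eq, abs_of_nonpos (sub_nonpos.2 htn)]
      using infDist_le_dist_of_mem (x := t) (mem_range_self (f := ((↑) : ℤ → ℝ)) (n + 1))
  · refine (le_infDist (range_nonempty _)).2 ?_
    rintro _ ⟨m, rfl⟩
    rw [Real.dist_eq]
    rcases le_or_gt m n with hmn | hnm
    · have : (m : ℝ) ≤ n := by exact_mod_cast hmn
      exact (min_le_left _ _).trans (by rw [abs_of_nonneg (by linarith)]; linarith)
    · have : (n : ℝ) + 1 ≤ m := by exact_mod_cast hnm
      exact (min_le_right _ _).trans (by rw [abs_of_nonpos (by linarith)]; linarith)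

noncomputable def spikes (t : ℝ) : ℝ := max 0 (1 - |t| * distToInt t)

lemma continuous_spikes : Continuous spikes := by
  unfold spikes distToInt
  fun_prop

lemma spikes_nonneg (t : ℝ) : 0 ≤ spikes t := le_max_left _ _

lemma spikes_le_one (t : ℝ) : spikes t ≤ 1 :=
  max_le zero_le_one (sub_le_self _ (mul_nonneg (abs_nonneg t) infDist_nonneg))

lemma spikes_intCast (n : ℤ) : spikes n = 1 := by
  simp [spikes, distToInt, infDist_zero_of_mem (mem_range_self n)]

lemma spikes_eq {k : ℕ} (hk : 1 ≤ k) {t : ℝ} (ht : t ∈ Icc (-(k : ℝ)) (-k + 1)) :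
    spikes t = max 0 (1 + t * min (t + k) (-k + 1 - t)) := by
  have hmem : t ∈ Icc (((-k : ℤ) : ℝ)) ((-k : ℤ) + 1) := by simpa using ht
  have ht0 : t ≤ 0 := ht.2.trans (by simpa using hk)
  rw [spikes, distToInt_eq_min hmem, abs_of_nonpos ht0]
  push_cast
  ring_nf

lemma antitoneOn_spikes {k : ℕ} (hk : 1 ≤ k) :
    AntitoneOn spikes (Icc (-(k : ℝ)) (-k + 1 / 2)) := by
  have hk' : (1 : ℝ) ≤ k := by exact_mod_cast hk
  intro s ⟨hks, hs⟩ t ⟨hkt, ht⟩ hst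
  rw [spikes_eq hk ⟨hks, by linarith⟩, spikes_eq hk ⟨hkt, by linarith⟩,
    min_eq_left (by linarith), min_eq_left (by linarith)]
  refine max_le_max le_rfl ?_
  nlinarith

lemma monotoneOn_spikes {k : ℕ} (hk : 1 ≤ k) :
    MonotoneOn spikes (Icc (-(k : ℝ) + 1 / 2) (-k + 1)) := by
  have hk' : (1 : ℝ) ≤ k := by exact_mod_cast hk
  intro s ⟨hks, hs⟩ t ⟨hkt, ht⟩ hst
  rw [spikes_eq hk ⟨by linarith, hs⟩, spikes_eq hk ⟨by linarith, ht⟩,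
    min_eq_right (by linarith), min_eq_right (by linarith)]
  refine max_le_max le_rfl ?_
  nlinarith

lemma eVariationOn_spikes_le {k : ℕ} (hk : 1 ≤ k) :
    eVariationOn spikes (Icc (-(k : ℝ)) (-k + 1)) ≤ ENNReal.ofReal 2 := by
  have hbound (s t : ℝ) : spikes s - spikes t ≤ 1 := by
    linarith [spikes_le_one s, spikes_nonneg t]
  calc eVariationOn spikes (Icc (-(k : ℝ)) (-k + 1))
      ≤ ENNReal.ofReal (spikes (-k) - spikes (-k + 1 / 2))
          + ENNReal.ofReal (spikes (-k + 1) - spikes (-k + 1 / 2)) :=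
        eVariationOn_Icc_le_of_antitoneOn_of_monotoneOn (by linarith) (by linarith)
          (antitoneOn_spikes hk) (monotoneOn_spikes hk)
    _ ≤ ENNReal.ofReal 1 + ENNReal.ofReal 1 := by gcongr <;> exact hbound _ _
    _ = ENNReal.ofReal 2 := by rw [← ENNReal.ofReal_add zero_le_one zero_le_one]; norm_num

lemma spikes_neg_natCast_sub_inv {k : ℕ} (hk : 2 ≤ k) : spikes (-k - (k : ℝ)⁻¹) = 0 := by
  have hk' : (2 : ℝ) ≤ k := by exact_mod_cast hk
  have hinv : (k : ℝ)⁻¹ ≤ 1 / 2 := by rw [inv_le_comm₀ (by positivity) (by norm_num)]; linarith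
  have hpos : 0 < (k : ℝ)⁻¹ := by positivity
  have hmem : -(k : ℝ) - (k : ℝ)⁻¹ ∈ Icc (((-k - 1 : ℤ) : ℝ)) ((-k - 1 : ℤ) + 1) := by
    push_cast; constructor <;> linarith
  rw [spikes, distToInt_eq_min hmem, abs_of_nonpos (by linarith)]
  push_cast
  rw [min_eq_right (by linarith)]
  refine max_eq_left ?_
  have : (k : ℝ) * (k : ℝ)⁻¹ = 1 := mul_inv_cancel₀ (by positivity)
  nlinarith

lemma not_uniformContinuousOn_spikes : ¬ UniformContinuousOn spikes (Iic 0) := by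
  intro h
  obtain ⟨δ, hδ, hδ'⟩ := Metric.uniformContinuousOn_iff.1 h 1 one_pos
  obtain ⟨k, hk⟩ := exists_nat_gt (max 2 δ⁻¹)
  have hk2 : 2 ≤ k := by exact_mod_cast (le_max_left _ _).trans hk.le
  have hkδ : (k : ℝ)⁻¹ < δ := inv_lt_of_inv_lt₀ hδ ((le_max_right _ _).trans_lt hk)
  have hpos : 0 < (k : ℝ)⁻¹ := by positivity
  have hdist : dist (-k : ℝ) (-k - (k : ℝ)⁻¹) < δ := by
    rwa [Real.dist_eq, sub_sub_cancel, abs_of_pos hpos]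
  have hgap := hδ' (-k) (by simp) (-k - (k : ℝ)⁻¹) (by simp only [mem_Iic]; linarith) hdist
  have h1 : spikes (-k) = 1 := by exact_mod_cast spikes_intCast (-k)
  simp [h1, spikes_neg_natCast_sub_inv hk2] at hgap

/-- there is a bounded continuous `x : (-∞,0] → ℝ` with uniformly
bounded variation on the intervals `[-k,-k+1]`, `k ≥ 1`, which is not uniformly
continuous on `(-∞,0]`. -/
theorem stmt7 :
    ∃ x : ℝ → ℝ, ContinuousOn x (Iic 0) ∧ (∃ M : ℝ, ∀ t ≤ (0:ℝ), |x t| ≤ M) ∧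
      (∃ c : ℝ, ∀ k : ℕ, 1 ≤ k →
        eVariationOn x (Icc (-(k:ℝ)) (-(k:ℝ) + 1)) ≤ ENNReal.ofReal c) ∧
      ¬ UniformContinuousOn x (Iic 0) :=
  ⟨spikes, continuous_spikes.continuousOn,
    ⟨1, fun t _ => abs_le.2 ⟨by linarith [spikes_nonneg t], spikes_le_one t⟩⟩,
    ⟨2, fun _ hk => eVariationOn_spikes_le hk⟩, not_uniformContinuousOn_spikes⟩
end

section
/- Let $A$ be a diagonal $m\times m$ matrix with negative entries. The positive cone $BC^+_A$ has empty interior in $(BC,\|\cdot\|_\infty)$. -/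
/-! If `x` were an interior point, `x + r • ψ` would lie in the cone for some `r > 0` and every
`ψ` of norm at most `1`. Choosing for `ψ` an Urysohn bump in one coordinate, equal to `1` at
`u < 0` and to `0` at `0`, the cone inequality gives `exp (a (0 - u)) * (x u + r) ≤ x 0` for
every `u < 0`, and letting `u → 0⁻` yields `x 0 + r ≤ x 0`. -/

open Set

/-- The cone `BC⁺_A` for a diagonal matrix `A` with diagonal entries `a i < 0`,
inside the Banach space `BC` of bounded continuous functions `(-∞,0] → ℝ^m`. -/
def conePlus (m : ℕ) (a : Fin m → ℝ) :
    Set (BoundedContinuousFunction ↥(Iic (0:ℝ)) (Fin m → ℝ)) :=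
  {x | (∀ t i, 0 ≤ x t i) ∧
    ∀ s t : ↥(Iic (0:ℝ)), s ≤ t → ∀ i,
      Real.exp (a i * ((t:ℝ) - (s:ℝ))) * x s i ≤ x t i}

open Filter Topology BoundedContinuousFunction

@[fun_prop]
theorem Set.continuous_projIic {α : Type*} [LinearOrder α] [TopologicalSpace α]
    [OrderClosedTopology α] {b : α} : Continuous (projIic b) :=
  (continuous_const.min continuous_id).subtype_mk _

theorem exists_pos_forall_norm_le_one_add_smul_mem {E : Type*} [SeminormedAddCommGroup E]
    [NormedSpace ℝ E] {K : Set E} {x : E} (hx : x ∈ interior K) :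
    ∃ r : ℝ, 0 < r ∧ ∀ v : E, ‖v‖ ≤ 1 → x + r • v ∈ K := by
  obtain ⟨ε, hε, hball⟩ := Metric.mem_nhds_iff.1 (mem_interior_iff_mem_nhds.1 hx)
  refine ⟨ε / 2, half_pos hε, fun v hv => hball ?_⟩
  rw [mem_ball_iff_norm, add_sub_cancel_left, norm_smul, Real.norm_of_nonneg (half_pos hε).le]
  nlinarith [norm_nonneg v]

theorem BoundedContinuousFunction.exists_norm_le_one_apply_eq_one_apply_eq_zero
    {X ι : Type*} [TopologicalSpace X] [NormalSpace X] [T1Space X] [Fintype ι]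
    [DecidableEq ι] {s t : X} (hst : s ≠ t) (i : ι) :
    ∃ ψ : X →ᵇ (ι → ℝ), ‖ψ‖ ≤ 1 ∧ ψ s i = 1 ∧ ψ t i = 0 := by
  obtain ⟨f, hft, hfs, hf01⟩ := exists_bounded_zero_one_of_closed isClosed_singleton
    isClosed_singleton (disjoint_singleton.2 hst.symm)
  have hf : ∀ y, ‖(Pi.single i (f y) : ι → ℝ)‖ ≤ 1 := fun y => by
    rw [Pi.norm_single, Real.norm_of_nonneg (hf01 y).1]; exact (hf01 y).2
  refine ⟨ofNormedAddCommGroup (fun y => (Pi.single i (f y) : ι → ℝ))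
    ((continuous_single i).comp f.continuous) 1 hf,
    norm_ofNormedAddCommGroup_le _ zero_le_one hf, ?_, ?_⟩
  · simpa using hfs rfl
  · simpa using hft rfl

theorem exp_mul_add_le_of_add_smul_mem_conePlus {m : ℕ} {a : Fin m → ℝ}
    {x ψ : BoundedContinuousFunction ↥(Iic (0:ℝ)) (Fin m → ℝ)} {r : ℝ}
    (h : x + r • ψ ∈ conePlus m a) {s t : ↥(Iic (0:ℝ))} (hst : s ≤ t) {i : Fin m}
    (hs : ψ s i = 1) (ht : ψ t i = 0) :
    Real.exp (a i * ((t:ℝ) - (s:ℝ))) * (x s i + r) ≤ x t i := by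
  simpa [hs, ht] using h.2 s t hst i

theorem stmt9_general (m : ℕ) (hm : 0 < m) (a : Fin m → ℝ) :
    interior (conePlus m a) = ∅ := by
  refine eq_empty_iff_forall_notMem.2 fun x hx => ?_
  obtain ⟨r, hr, hball⟩ := exists_pos_forall_norm_le_one_add_smul_mem hx
  let i : Fin m := ⟨0, hm⟩
  let F : ℝ → ℝ := fun u => Real.exp (a i * (0 - u)) * (x (projIic 0 u) i + r)
  have hF : ∀ u < 0, F u ≤ x ⟨0, mem_Iic.2 le_rfl⟩ i := fun u hu => by
    obtain ⟨ψ, hψ, hψs, hψt⟩ := exists_norm_le_one_apply_eq_one_apply_eq_zero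
      (s := ⟨u, mem_Iic.2 hu.le⟩) (t := ⟨0, mem_Iic.2 le_rfl⟩) (Subtype.coe_ne_coe.1 hu.ne) i
    simpa [F, projIic_of_mem (b := (0:ℝ)) hu.le] using exp_mul_add_le_of_add_smul_mem_conePlus
      (hball ψ hψ) (Subtype.coe_le_coe.1 hu.le) hψs hψt
  have hlim : Tendsto F (𝓝[<] 0) (𝓝 (x ⟨0, mem_Iic.2 le_rfl⟩ i + r)) := by
    have hFc : Continuous F := by fun_prop
    simpa [F] using (hFc.tendsto 0).mono_left nhdsWithin_le_nhds
  linarith [le_of_tendsto hlim (eventually_nhdsWithin_of_forall hF)]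

/-- the positive cone `BC⁺_A` has empty interior in
`(BC, ‖·‖_∞)`. -/
theorem stmt9 (m : ℕ) (hm : 0 < m) (a : Fin m → ℝ) (ha : ∀ i, a i < 0) :
    interior (conePlus m a) = ∅ :=
  stmt9_general m hm a
end

section
/- Let $A$ be an $m\times m$ diagonal matrix with negative diagonal entries, so $\|e^{At}\|\leq e^{-at}$ for $t\geq 0$, where $a=\min_i|a_i|>0$. Let $v,c:(-\infty,0]\to\mathbb{R}^m$ be bounded $C^1$ functions with bounded derivatives. Define $b(s)=\int_{-\infty}^{s} e^{A(s-\tau)}\sup\{v'(\tau)-Av(\tau),\, c'(\tau)-Ac(\tau)\}\,d\tau$ (componentwise supremum). Then $b$ is well defined, bounded, and satisfies $v\leq_A b$ and $c\leq_A b$ for the exponential order $\leq_A$. -/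
open Set MeasureTheory Filter Topology

/-!
Componentwise, `g = max (v' - a v) (c' - a c)` dominates `u' - a u` for `u = v` and for `u = c`.
With the integrating factor `e^{-aτ}`, the inequality `u' - a u ≤ g` reads
`(e^{-aτ} u)' ≤ e^{-aτ} g`. Hence `t ↦ ∫_{-∞}^t e^{-aτ} g(τ) dτ - e^{-at} u(t)` is
nondecreasing on `(-∞, 0]`; since `a < 0` and `u`, `g` are bounded, both terms tend to `0`
at `-∞`, so it is also nonnegative. As `b(t) = e^{at} ∫_{-∞}^t e^{-aτ} g(τ) dτ`, these are
exactly `u ≤ b` and the monotonicity of `e^{-at} (b(t) - u(t))`.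
-/

noncomputable def expConv (a : ℝ) (g : ℝ → ℝ) (s : ℝ) : ℝ :=
  ∫ τ in Iic s, Real.exp (a * (s - τ)) * g τ

section ExpConv

variable {a M K s : ℝ} {g u u' : ℝ → ℝ}

lemma tendsto_exp_neg_mul_atBot (ha : a < 0) :
    Tendsto (fun t => Real.exp (-a * t)) atBot (𝓝 0) :=
  Real.tendsto_exp_atBot.comp (tendsto_id.const_mul_atBot (neg_pos.2 ha))

lemma exp_mul_sub_mul (a s τ x : ℝ) :
    Real.exp (a * (s - τ)) * x = Real.exp (a * s) * (Real.exp (-a * τ) * x) := by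
  rw [← mul_assoc, ← Real.exp_add]
  ring_nf

lemma expConv_eq (a : ℝ) (g : ℝ → ℝ) (s : ℝ) :
    expConv a g s = Real.exp (a * s) * ∫ τ in Iic s, Real.exp (-a * τ) * g τ := by
  simp only [expConv, exp_mul_sub_mul, integral_const_mul]

lemma exp_neg_mul_mul_expConv (a : ℝ) (g : ℝ → ℝ) (s : ℝ) :
    Real.exp (-a * s) * expConv a g s = ∫ τ in Iic s, Real.exp (-a * τ) * g τ := by
  rw [expConv_eq, ← mul_assoc, ← Real.exp_add, neg_mul, neg_add_cancel, Real.exp_zero, one_mul]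

lemma integrableOn_exp_neg_mul_mul_Iic (ha : a < 0) (hg : ContinuousOn g (Iic 0))
    (hgM : ∀ τ ≤ 0, |g τ| ≤ M) (hs : s ≤ 0) :
    IntegrableOn (fun τ => Real.exp (-a * τ) * g τ) (Iic s) := by
  have hmeas :
      AEStronglyMeasurable (fun τ => Real.exp (-a * τ) * g τ) (volume.restrict (Iic s)) :=
    ((by fun_prop : Continuous fun τ => Real.exp (-a * τ)).continuousOn.mul
      (hg.mono (Iic_subset_Iic.2 hs))).aestronglyMeasurable measurableSet_Iic
  refine ((integrableOn_exp_mul_Iic (neg_pos.2 ha) s).mul_const M).mono' hmeas ?_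
  filter_upwards [ae_restrict_mem measurableSet_Iic] with τ hτ
  rw [norm_mul, Real.norm_of_nonneg (Real.exp_pos _).le]
  exact mul_le_mul_of_nonneg_left (hgM τ (hτ.trans hs)) (Real.exp_pos _).le

lemma integrableOn_exp_mul_sub_mul_Iic (ha : a < 0) (hg : ContinuousOn g (Iic 0))
    (hgM : ∀ τ ≤ 0, |g τ| ≤ M) (hs : s ≤ 0) :
    IntegrableOn (fun τ => Real.exp (a * (s - τ)) * g τ) (Iic s) := by
  simp only [exp_mul_sub_mul]
  exact (integrableOn_exp_neg_mul_mul_Iic ha hg hgM hs).const_mul (Real.exp (a * s))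

lemma abs_integral_exp_neg_mul_mul_Iic_le (ha : a < 0) (hgM : ∀ τ ≤ 0, |g τ| ≤ M)
    (hs : s ≤ 0) :
    |∫ τ in Iic s, Real.exp (-a * τ) * g τ| ≤ M * Real.exp (-a * s) / -a := by
  have hbound :
      ‖∫ τ in Iic s, Real.exp (-a * τ) * g τ‖ ≤ ∫ τ in Iic s, M * Real.exp (-a * τ) := by
    refine norm_integral_le_of_norm_le ((integrableOn_exp_mul_Iic (neg_pos.2 ha) s).const_mul M) ?_
    filter_upwards [ae_restrict_mem measurableSet_Iic] with τ hτ
    rw [norm_mul, Real.norm_of_nonneg (Real.exp_pos _).le, mul_comm M]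
    exact mul_le_mul_of_nonneg_left (hgM τ (hτ.trans hs)) (Real.exp_pos _).le
  rwa [integral_const_mul, integral_exp_mul_Iic (neg_pos.2 ha), ← mul_div_assoc] at hbound

lemma abs_expConv_le (ha : a < 0) (hgM : ∀ τ ≤ 0, |g τ| ≤ M) (hs : s ≤ 0) :
    |expConv a g s| ≤ M / -a := by
  have hexp : Real.exp (a * s) * Real.exp (-a * s) = 1 := by
    rw [← Real.exp_add, neg_mul, add_neg_cancel, Real.exp_zero]
  calc |expConv a g s|
      = Real.exp (a * s) * |∫ τ in Iic s, Real.exp (-a * τ) * g τ| := by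
        rw [expConv_eq, abs_mul, Real.abs_exp]
    _ ≤ Real.exp (a * s) * (M * Real.exp (-a * s) / -a) := by
        gcongr; exact abs_integral_exp_neg_mul_mul_Iic_le ha hgM hs
    _ = M / -a := by rw [mul_div_assoc', mul_left_comm, hexp, mul_one]

lemma tendsto_integral_exp_neg_mul_mul_Iic_atBot (ha : a < 0) (hgM : ∀ τ ≤ 0, |g τ| ≤ M) :
    Tendsto (fun s => ∫ τ in Iic s, Real.exp (-a * τ) * g τ) atBot (𝓝 0) := by
  have hbound : Tendsto (fun s => M * Real.exp (-a * s) / -a) atBot (𝓝 0) := by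
    simpa using ((tendsto_exp_neg_mul_atBot ha).const_mul M).div_const (-a)
  refine squeeze_zero_norm' ?_ hbound
  filter_upwards [eventually_le_atBot 0] with s hs
  exact abs_integral_exp_neg_mul_mul_Iic_le ha hgM hs

lemma tendsto_exp_neg_mul_mul_atBot (ha : a < 0) (huK : ∀ t ≤ 0, |u t| ≤ K) :
    Tendsto (fun t => Real.exp (-a * t) * u t) atBot (𝓝 0) := by
  have hbound : Tendsto (fun t => Real.exp (-a * t) * K) atBot (𝓝 0) := by
    simpa using (tendsto_exp_neg_mul_atBot ha).mul_const K
  refine squeeze_zero_norm' ?_ hbound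
  filter_upwards [eventually_le_atBot 0] with t ht
  rw [norm_mul, Real.norm_of_nonneg (Real.exp_pos _).le]
  exact mul_le_mul_of_nonneg_left (huK t ht) (Real.exp_pos _).le

variable (hu : ∀ t ≤ 0, HasDerivWithinAt u (u' t) (Iic 0) t) (hu' : ContinuousOn u' (Iic 0))
include hu hu'

lemma continuousOn_exp_neg_mul_mul_deriv_sub :
    ContinuousOn (fun τ => Real.exp (-a * τ) * (u' τ - a * u τ)) (Iic 0) := by
  have hucont : ContinuousOn u (Iic 0) := fun t ht => (hu t ht).continuousWithinAt
  fun_prop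

lemma integral_exp_neg_mul_mul_deriv_sub {t : ℝ} (hst : s ≤ t) (ht : t ≤ 0) :
    ∫ τ in s..t, Real.exp (-a * τ) * (u' τ - a * u τ) =
      Real.exp (-a * t) * u t - Real.exp (-a * s) * u s := by
  have hsub : Icc s t ⊆ Iic 0 := fun x hx => hx.2.trans ht
  have hucont : ContinuousOn u (Icc s t) :=
    fun x hx => (hu x (hsub hx)).continuousWithinAt.mono hsub
  have hcont : ContinuousOn (fun τ => Real.exp (-a * τ) * u τ) (Icc s t) := by fun_prop
  refine intervalIntegral.integral_eq_sub_of_hasDeriv_right_of_le hst hcont (fun x hx => ?_)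
    (((continuousOn_exp_neg_mul_mul_deriv_sub hu hu').mono hsub).intervalIntegrable_of_Icc hst)
  have hx0 : x < 0 := hx.2.trans_le ht
  have hux : HasDerivAt u (u' x) x := (hu x hx0.le).hasDerivAt (Iic_mem_nhds hx0)
  have hprod := ((hasDerivAt_id x).const_mul (-a)).exp.mul hux
  exact (hprod.congr_deriv (by simp only [id]; ring)).hasDerivWithinAt

lemma monotoneOn_integral_exp_neg_mul_mul_Iic_sub (ha : a < 0) (hg : ContinuousOn g (Iic 0))
    (hgM : ∀ τ ≤ 0, |g τ| ≤ M) (hle : ∀ τ ≤ 0, u' τ - a * u τ ≤ g τ) :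
    MonotoneOn (fun t => (∫ τ in Iic t, Real.exp (-a * τ) * g τ) - Real.exp (-a * t) * u t)
      (Iic 0) := by
  intro s hs t ht hst
  have hint := integrableOn_exp_neg_mul_mul_Iic ha hg hgM ht
  have hsplit : ∫ τ in Iic t, Real.exp (-a * τ) * g τ =
      (∫ τ in Iic s, Real.exp (-a * τ) * g τ) + ∫ τ in Ioc s t, Real.exp (-a * τ) * g τ := by
    rw [← Iic_union_Ioc_eq_Iic hst, setIntegral_union (Iic_disjoint_Ioc le_rfl) measurableSet_Ioc
      (hint.mono_set (Iic_subset_Iic.2 hst)) (hint.mono_set Ioc_subset_Iic_self)]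
  have hincr : Real.exp (-a * t) * u t - Real.exp (-a * s) * u s ≤
      ∫ τ in Ioc s t, Real.exp (-a * τ) * g τ := by
    rw [← integral_exp_neg_mul_mul_deriv_sub hu hu' hst ht, intervalIntegral.integral_of_le hst]
    refine setIntegral_mono_on ?_ (hint.mono_set Ioc_subset_Iic_self) measurableSet_Ioc
      fun τ hτ => mul_le_mul_of_nonneg_left (hle τ (hτ.2.trans ht)) (Real.exp_pos _).le
    exact (((continuousOn_exp_neg_mul_mul_deriv_sub hu hu').mono
      fun x hx => hx.2.trans ht).integrableOn_Icc).mono_set Ioc_subset_Icc_self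
  dsimp only
  linarith

lemma exp_neg_mul_mul_le_integral_Iic (ha : a < 0) (hg : ContinuousOn g (Iic 0))
    (hgM : ∀ τ ≤ 0, |g τ| ≤ M) (huK : ∀ t ≤ 0, |u t| ≤ K)
    (hle : ∀ τ ≤ 0, u' τ - a * u τ ≤ g τ) (hs : s ≤ 0) :
    Real.exp (-a * s) * u s ≤ ∫ τ in Iic s, Real.exp (-a * τ) * g τ := by
  have hlim : Tendsto
      (fun t => (∫ τ in Iic t, Real.exp (-a * τ) * g τ) - Real.exp (-a * t) * u t) atBot (𝓝 0) := by
    simpa using (tendsto_integral_exp_neg_mul_mul_Iic_atBot ha hgM).sub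
      (tendsto_exp_neg_mul_mul_atBot ha huK)
  have hmono := monotoneOn_integral_exp_neg_mul_mul_Iic_sub hu hu' ha hg hgM hle
  have hnonneg : 0 ≤ (∫ τ in Iic s, Real.exp (-a * τ) * g τ) - Real.exp (-a * s) * u s :=
    le_of_tendsto hlim <| by
      filter_upwards [eventually_le_atBot s] with t hts using hmono (hts.trans hs) hs hts
  linarith

lemma le_expConv (ha : a < 0) (hg : ContinuousOn g (Iic 0)) (hgM : ∀ τ ≤ 0, |g τ| ≤ M)
    (huK : ∀ t ≤ 0, |u t| ≤ K) (hle : ∀ τ ≤ 0, u' τ - a * u τ ≤ g τ) (hs : s ≤ 0) :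
    u s ≤ expConv a g s := by
  have h := exp_neg_mul_mul_le_integral_Iic hu hu' ha hg hgM huK hle hs
  rw [← exp_neg_mul_mul_expConv] at h
  exact le_of_mul_le_mul_left h (Real.exp_pos _)

lemma monotoneOn_exp_neg_mul_mul_expConv_sub (ha : a < 0) (hg : ContinuousOn g (Iic 0))
    (hgM : ∀ τ ≤ 0, |g τ| ≤ M) (hle : ∀ τ ≤ 0, u' τ - a * u τ ≤ g τ) :
    MonotoneOn (fun t => Real.exp (-a * t) * (expConv a g t - u t)) (Iic 0) := by
  simpa only [mul_sub, exp_neg_mul_mul_expConv] using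
    monotoneOn_integral_exp_neg_mul_mul_Iic_sub hu hu' ha hg hgM hle

end ExpConv

lemma abs_sub_mul_le_of_abs_le {a x x' K : ℝ} (hx : |x| ≤ K) (hx' : |x'| ≤ K) :
    |x' - a * x| ≤ (1 + |a|) * K :=
  calc |x' - a * x| ≤ |x'| + |a| * |x| := (abs_sub _ _).trans_eq (by rw [abs_mul])
    _ ≤ K + |a| * K := by gcongr
    _ = (1 + |a|) * K := by ring

lemma pi_norm_le_sum_of_norm_le {ι : Type*} [Fintype ι] {E : ι → Type*}
    [∀ i, SeminormedAddGroup (E i)] {x : ∀ i, E i} {C : ι → ℝ} (h : ∀ i, ‖x i‖ ≤ C i) :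
    ‖x‖ ≤ ∑ i, C i := by
  have hC : ∀ i, 0 ≤ C i := fun i => (norm_nonneg _).trans (h i)
  refine (pi_norm_le_iff_of_nonneg (Finset.sum_nonneg fun i _ => hC i)).2 fun i => ?_
  exact (h i).trans (Finset.single_le_sum (fun j _ => hC j) (Finset.mem_univ i))

lemma le_expConv_and_monotoneOn_of_pi {m : ℕ} {a : Fin m → ℝ} (ha : ∀ i, a i < 0)
    {u u' : ℝ → Fin m → ℝ} (hu : ∀ t ≤ (0:ℝ), HasDerivWithinAt u (u' t) (Iic 0) t)
    (hu' : ContinuousOn u' (Iic 0)) {K : ℝ} (huK : ∀ t ≤ (0:ℝ), ‖u t‖ ≤ K)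
    {g : Fin m → ℝ → ℝ} {M : Fin m → ℝ} (hg : ∀ i, ContinuousOn (g i) (Iic 0))
    (hgM : ∀ i, ∀ τ ≤ (0:ℝ), |g i τ| ≤ M i)
    (hle : ∀ i, ∀ τ ≤ (0:ℝ), u' τ i - a i * u τ i ≤ g i τ)
    {b : ℝ → Fin m → ℝ} (hb : ∀ s ≤ (0:ℝ), ∀ i, b s i = expConv (a i) (g i) s) :
    (∀ s ≤ (0:ℝ), ∀ i, u s i ≤ b s i) ∧
      ∀ i, MonotoneOn (fun t => Real.exp (-a i * t) * (b t i - u t i)) (Iic 0) := by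
  have hui i : ∀ t ≤ (0:ℝ), HasDerivWithinAt (u · i) (u' t i) (Iic 0) t :=
    fun t ht => hasDerivWithinAt_pi.1 (hu t ht) i
  have hu'i i : ContinuousOn (u' · i) (Iic 0) := (continuous_apply i).comp_continuousOn hu'
  have huKi i : ∀ t ≤ (0:ℝ), |u t i| ≤ K :=
    fun t ht => (norm_le_pi_norm (u t) i).trans (huK t ht)
  refine ⟨fun s hs i => ?_, fun i => ?_⟩
  · rw [hb s hs i]
    exact le_expConv (hui i) (hu'i i) (ha i) (hg i) (hgM i) (huKi i) (hle i) hs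
  · refine (monotoneOn_exp_neg_mul_mul_expConv_sub (hui i) (hu'i i) (ha i) (hg i) (hgM i)
      (hle i)).congr fun t ht => ?_
    simp only [hb t ht i]

/-- for `A = diag(a i)` with `a i < 0`, and bounded `C¹` functions
`v, c` on `(-∞,0]` with bounded derivatives, the function
`b(s) = ∫_{-∞}^s e^{A(s-τ)} sup{v'(τ)-Av(τ), c'(τ)-Ac(τ)} dτ` is well defined,
bounded, and satisfies `v ≤_A b` and `c ≤_A b`. -/
theorem stmt13 (m : ℕ) (a : Fin m → ℝ) (ha : ∀ i, a i < 0)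
    (v c v' c' : ℝ → Fin m → ℝ)
    (hv : ∀ t ≤ (0:ℝ), HasDerivWithinAt v (v' t) (Iic 0) t)
    (hc : ∀ t ≤ (0:ℝ), HasDerivWithinAt c (c' t) (Iic 0) t)
    (hv'cont : ContinuousOn v' (Iic 0)) (hc'cont : ContinuousOn c' (Iic 0))
    (Kv : ℝ) (hKv : ∀ t ≤ (0:ℝ), ‖v t‖ ≤ Kv ∧ ‖v' t‖ ≤ Kv)
    (Kc : ℝ) (hKc : ∀ t ≤ (0:ℝ), ‖c t‖ ≤ Kc ∧ ‖c' t‖ ≤ Kc)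
    (b : ℝ → Fin m → ℝ)
    (hb : ∀ s ≤ (0:ℝ), ∀ i, b s i =
      ∫ τ in Iic s, Real.exp (a i * (s - τ)) *
        max (v' τ i - a i * v τ i) (c' τ i - a i * c τ i)) :
    -- well defined: the integrand is integrable
    (∀ s ≤ (0:ℝ), ∀ i, MeasureTheory.IntegrableOn
      (fun τ => Real.exp (a i * (s - τ)) *
        max (v' τ i - a i * v τ i) (c' τ i - a i * c τ i)) (Iic s)) ∧
    -- bounded
    (∃ Kb : ℝ, ∀ s ≤ (0:ℝ), ‖b s‖ ≤ Kb) ∧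
    -- v ≤_A b
    (∀ s ≤ (0:ℝ), ∀ i, v s i ≤ b s i) ∧
    (∀ i, MonotoneOn (fun t => Real.exp (-(a i) * t) * (b t i - v t i)) (Iic 0)) ∧
    -- c ≤_A b
    (∀ s ≤ (0:ℝ), ∀ i, c s i ≤ b s i) ∧
    (∀ i, MonotoneOn (fun t => Real.exp (-(a i) * t) * (b t i - c t i)) (Iic 0)) := by
  let g : Fin m → ℝ → ℝ := fun i τ => max (v' τ i - a i * v τ i) (c' τ i - a i * c τ i)
  let M : Fin m → ℝ := fun i => max ((1 + |a i|) * Kv) ((1 + |a i|) * Kc)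
  have hvcont : ContinuousOn v (Iic 0) := fun t ht => (hv t ht).continuousWithinAt
  have hccont : ContinuousOn c (Iic 0) := fun t ht => (hc t ht).continuousWithinAt
  have hg i : ContinuousOn (g i) (Iic 0) := by fun_prop
  have hgM i : ∀ τ ≤ (0:ℝ), |g i τ| ≤ M i := fun τ hτ =>
    abs_max_le_max_abs_abs.trans <| max_le_max
      (abs_sub_mul_le_of_abs_le ((norm_le_pi_norm _ i).trans (hKv τ hτ).1)
        ((norm_le_pi_norm _ i).trans (hKv τ hτ).2))
      (abs_sub_mul_le_of_abs_le ((norm_le_pi_norm _ i).trans (hKc τ hτ).1)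
        ((norm_le_pi_norm _ i).trans (hKc τ hτ).2))
  have hbg : ∀ s ≤ (0:ℝ), ∀ i, b s i = expConv (a i) (g i) s := hb
  obtain ⟨hvb, hvb_mono⟩ := le_expConv_and_monotoneOn_of_pi ha hv hv'cont
    (fun t ht => (hKv t ht).1) hg hgM (fun _ _ _ => le_max_left _ _) hbg
  obtain ⟨hcb, hcb_mono⟩ := le_expConv_and_monotoneOn_of_pi ha hc hc'cont
    (fun t ht => (hKc t ht).1) hg hgM (fun _ _ _ => le_max_right _ _) hbg
  refine ⟨fun s hs i => integrableOn_exp_mul_sub_mul_Iic (ha i) (hg i) (hgM i) hs,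
    ⟨∑ i, M i / -a i, fun s hs => pi_norm_le_sum_of_norm_le fun i => ?_⟩,
    hvb, hvb_mono, hcb, hcb_mono⟩
  rw [hbg s hs i]
  exact abs_expConv_le (ha i) (hgM i) hs
end
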